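/- arXiv:2010.14181 — 3 statements merged into one kernel-verified Lean document; each statement's English description precedes it below -/
import Mathlib

section
/- Let k ≥ 3 and let A_1, …, A_k be sets of m integers each in {1, …, U}. Define the m^{k−2}(k−1)U-dimensional 0/1 vectors v'_{A_1+⋯+A_{k−1}} := the concatenation, over all tuples (a_1, …, a_{k−2}) ∈ A_1 × ⋯ × A_{k−2} in lexicographic order, of the blocks 0^{a_1+⋯+a_{k−2}} ∘ v_{A_{k−1}} ∘ 0^{(k−2)U−a_1−⋯−a_{k−2}}, and v'_{A_k} := the m^{k−2}-fold repetition of the block v_{A_k} ∘ 0^{(k−2)U}. Then the inner product of v'_{A_1+⋯+A_{k−1}} and v'_{A_k} is nonzero if and only if there is a tuple (a_1, …, a_k) ∈ A_1 × ⋯ × A_k with a_1 + ⋯ + a_{k−1} = a_k. -/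
/-- Characteristic vector (over ℕ) of a set `X ⊆ {1, …, U}`:
position `i ∈ {1, …, U}` carries a `1` iff `i ∈ X`. -/
def charVec (U : ℕ) (X : Finset ℕ) : List ℕ :=
  (List.range U).map (fun i => if i + 1 ∈ X then 1 else 0)

/-- Inner product of two 0/1 vectors given as lists of equal length. -/
def innerProd (u v : List ℕ) : ℕ := (List.zipWith (· * ·) u v).sum

/-! The inner product splits into the inner products of the `m^(k-2)` blocks; all blocks have
length `(k-1)U` because `S j ≤ (k-2)U`. Block `j` pairs `v_{A_{k-1}}` shifted by `S j` with
`v_{A_k}`, so it contributes iff `S j + x ∈ A_k` for some `x ∈ A_{k-1}`. Finally, the base-`m`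
digits of the block indices `j < m^(k-2)` run through all index tuples of `A_1 × ⋯ × A_{k-2}`. -/

open Finset

theorem exists_lt_pow_digit_eq {m n : ℕ} (f : ℕ → ℕ) (hf : ∀ d < n, f d < m) :
    ∃ j < m ^ n, ∀ d < n, j / m ^ (n - 1 - d) % m = f d := by
  -- `finFunctionFinEquiv` lists the digits least significant first, so reverse `f`.
  let g : Fin n → Fin m := fun e => ⟨f (n - 1 - e), hf _ (by omega)⟩
  refine ⟨finFunctionFinEquiv g, (finFunctionFinEquiv g).isLt, fun d hd => ?_⟩
  have := congrArg (fun h => (h ⟨n - 1 - d, by omega⟩ : ℕ))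
    (finFunctionFinEquiv.symm_apply_apply g)
  simp only [finFunctionFinEquiv_symm_apply_val, g] at this
  rwa [Nat.sub_sub_self (by omega)] at this

theorem List.lt_length_of_getD_ne {α : Type*} {l : List α} {p : ℕ} {d : α}
    (h : l.getD p d ≠ d) : p < l.length := by
  by_contra hp
  exact h (List.getD_eq_default _ _ (by omega))

theorem List.getD_append_replicate_default {α : Type*} (l : List α) (d : α) (t p : ℕ) :
    (l ++ List.replicate t d).getD p d = l.getD p d := by
  grind

theorem List.getD_replicate_append_ne_default {α : Type*} (l : List α) (d : α) (s p : ℕ) :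
    (List.replicate s d ++ l).getD p d ≠ d ↔ s ≤ p ∧ l.getD (p - s) d ≠ d := by
  grind

theorem innerProd_ne_zero_iff (u v : List ℕ) :
    innerProd u v ≠ 0 ↔ ∃ p, u.getD p 0 ≠ 0 ∧ v.getD p 0 ≠ 0 := by
  rw [innerProd, Ne, List.sum_eq_zero_iff]
  simp only [List.mem_iff_getElem, List.getElem_zipWith, List.length_zipWith, not_forall]
  constructor
  · rintro ⟨_, ⟨p, hp, rfl⟩, h⟩
    refine ⟨p, ?_⟩
    rw [List.getD_eq_getElem _ _ (by omega), List.getD_eq_getElem _ _ (by omega)]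
    exact mul_ne_zero_iff.mp h
  · rintro ⟨p, hu, hv⟩
    have hpu := List.lt_length_of_getD_ne hu
    have hpv := List.lt_length_of_getD_ne hv
    rw [List.getD_eq_getElem _ _ hpu] at hu
    rw [List.getD_eq_getElem _ _ hpv] at hv
    exact ⟨_, ⟨p, by omega, rfl⟩, mul_ne_zero hu hv⟩

theorem innerProd_append {u₁ v₁ : List ℕ} (u₂ v₂ : List ℕ) (h : u₁.length = v₁.length) :
    innerProd (u₁ ++ u₂) (v₁ ++ v₂) = innerProd u₁ v₁ + innerProd u₂ v₂ := by
  rw [innerProd, List.zipWith_append h, List.sum_append, innerProd, innerProd]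

theorem innerProd_flatten_map_replicate {α : Type*} (B : α → List ℕ) (w : List ℕ) (l : List α)
    (hB : ∀ j ∈ l, (B j).length = w.length) :
    innerProd (l.map B).flatten (List.replicate l.length w).flatten =
      (l.map fun j => innerProd (B j) w).sum := by
  induction l with
  | nil => rfl
  | cons x l ih =>
    simp only [List.map_cons, List.length_cons, List.replicate_succ, List.flatten_cons,
      List.sum_cons]
    rw [innerProd_append _ _ (hB x List.mem_cons_self),
      ih fun j hj => hB j (List.mem_cons_of_mem _ hj)]

theorem charVec_length (U : ℕ) (X : Finset ℕ) : (charVec U X).length = U := by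
  simp [charVec]

theorem getD_charVec_ne_zero_iff {U : ℕ} {X : Finset ℕ} (hX : X ⊆ Icc 1 U) (p : ℕ) :
    (charVec U X).getD p 0 ≠ 0 ↔ p + 1 ∈ X := by
  by_cases hp : p < U
  · simp [charVec, List.getD_eq_getElem?_getD, hp]
  · have : p + 1 ∉ X := fun h => hp (by have := mem_Icc.mp (hX h); omega)
    simp [charVec, List.getD_eq_getElem?_getD, hp, this]

theorem innerProd_shifted_charVec_ne_zero_iff {U : ℕ} {X Y : Finset ℕ} (hX : X ⊆ Icc 1 U)
    (hY : Y ⊆ Icc 1 U) (s t z : ℕ) :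
    innerProd (List.replicate s 0 ++ charVec U X ++ List.replicate t 0)
      (charVec U Y ++ List.replicate z 0) ≠ 0 ↔ ∃ x ∈ X, s + x ∈ Y := by
  simp only [innerProd_ne_zero_iff, List.getD_append_replicate_default,
    List.getD_replicate_append_ne_default, getD_charVec_ne_zero_iff hX,
    getD_charVec_ne_zero_iff hY]
  constructor
  · rintro ⟨p, ⟨hsp, hpX⟩, hpY⟩
    exact ⟨p - s + 1, hpX, by rwa [show s + (p - s + 1) = p + 1 by omega]⟩
  · rintro ⟨x, hx, hsx⟩
    have := (mem_Icc.mp (hX hx)).1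
    exact ⟨s + x - 1, ⟨by omega, by rwa [show s + x - 1 - s + 1 = x by omega]⟩,
      by rwa [show s + x - 1 + 1 = s + x by omega]⟩

theorem exists_digitSum_add_mem_iff (n m : ℕ) (a : ℕ → ℕ → ℕ) :
    (∃ j < m ^ n, ∃ x ∈ (range m).image (a n),
      (∑ d ∈ range n, a d (j / m ^ (n - 1 - d) % m)) + x ∈ (range m).image (a (n + 1))) ↔
    ∃ f : ℕ → ℕ, (∀ i < n + 2, f i < m) ∧
      ∑ i ∈ range (n + 1), a i (f i) = a (n + 1) (f (n + 1)) := by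
  simp only [mem_image, mem_range]
  constructor
  · rintro ⟨j, -, _, ⟨s, hs, rfl⟩, t, ht, hst⟩
    refine ⟨fun i => if i < n then j / m ^ (n - 1 - i) % m else if i = n then s else t,
      fun i _ => ?_, ?_⟩
    · dsimp only
      split_ifs
      exacts [Nat.mod_lt _ (by omega), hs, ht]
    · simp only [sum_range_succ, lt_self_iff_false, if_true, if_false,
        show n + 1 ≠ n by omega, show ¬ n + 1 < n by omega, hst]
      congr 1
      exact sum_congr rfl fun i hi => by simp [mem_range.mp hi]
  · rintro ⟨f, hf, hsum⟩
    obtain ⟨j, hj, hdigit⟩ := exists_lt_pow_digit_eq (n := n) f fun d hd => hf d (by omega)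
    refine ⟨j, hj, a n (f n), ⟨f n, hf n (by omega), rfl⟩, f (n + 1), hf _ (by omega), ?_⟩
    rw [← hsum, sum_range_succ]
    congr 1
    exact sum_congr rfl fun d hd => by rw [hdigit d (mem_range.mp hd)]

theorem innerProd_shiftedBlocks_ne_zero_iff {U L N : ℕ} {X Y : Finset ℕ} (hX : X ⊆ Icc 1 U)
    (hY : Y ⊆ Icc 1 U) (S : ℕ → ℕ) (hS : ∀ j < N, S j ≤ L) :
    innerProd ((List.range N).map fun j =>
        List.replicate (S j) 0 ++ charVec U X ++ List.replicate (L - S j) 0).flatten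
      (List.replicate N (charVec U Y ++ List.replicate L 0)).flatten ≠ 0 ↔
      ∃ j < N, ∃ x ∈ X, S j + x ∈ Y := by
  have hlen : ∀ j ∈ List.range N,
      (List.replicate (S j) 0 ++ charVec U X ++ List.replicate (L - S j) 0).length =
        (charVec U Y ++ List.replicate L 0).length := fun j hj => by
    have := hS j (List.mem_range.mp hj)
    simp only [List.length_append, List.length_replicate, charVec_length]
    omega
  have := innerProd_flatten_map_replicate _ _ _ hlen
  rw [List.length_range] at this
  rw [this, Ne, List.sum_eq_zero_iff]
  simp [-List.append_assoc, innerProd_shifted_charVec_ne_zero_iff hX hY]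

theorem stmt1_general (k m U : ℕ) (hk : 3 ≤ k)
    (a : ℕ → ℕ → ℕ)
    (hmem : ∀ i < k, ∀ j < m, a i j ∈ Finset.Icc 1 U) :
    -- sum of the tuple encoded (in lexicographic order) by block index `j < m^(k-2)`
    let S : ℕ → ℕ := fun j =>
      ∑ d ∈ Finset.range (k - 2), a d (j / m ^ (k - 2 - 1 - d) % m)
    let vAk1 : List ℕ := charVec U (Finset.image (a (k - 2)) (Finset.range m))
    let vAk : List ℕ := charVec U (Finset.image (a (k - 1)) (Finset.range m))
    let v1 : List ℕ := ((List.range (m ^ (k - 2))).map (fun j =>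
      List.replicate (S j) 0 ++ vAk1 ++ List.replicate ((k - 2) * U - S j) 0)).flatten
    let v2 : List ℕ :=
      (List.replicate (m ^ (k - 2)) (vAk ++ List.replicate ((k - 2) * U) 0)).flatten
    innerProd v1 v2 ≠ 0 ↔
      ∃ f : ℕ → ℕ, (∀ i < k, f i < m) ∧
        (∑ i ∈ Finset.range (k - 1), a i (f i)) = a (k - 1) (f (k - 1)) := by
  obtain ⟨n, rfl⟩ : ∃ n, k = n + 2 := ⟨k - 2, by omega⟩
  simp -zeta only [Nat.add_sub_cancel, show n + 2 - 1 = n + 1 from rfl]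
  intro S vAk1 vAk v1 v2
  have hA : ∀ i < n + 2, (range m).image (a i) ⊆ Icc 1 U := fun i hi x hx => by
    obtain ⟨j, hj, rfl⟩ := mem_image.mp hx
    exact hmem i hi j (mem_range.mp hj)
  have hS : ∀ j < m ^ n, S j ≤ n * U := fun j hj => by
    have hm : 0 < m := Nat.pos_of_ne_zero <| by
      rintro rfl
      simp [zero_pow (show n ≠ 0 by omega)] at hj
    simpa using sum_le_card_nsmul (range n) _ U fun d hd =>
      (mem_Icc.mp (hmem d (by simp at hd; omega) _ (Nat.mod_lt _ hm))).2
  rw [innerProd_shiftedBlocks_ne_zero_iff (hA n (by omega)) (hA (n + 1) (by omega)) S hS]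
  exact exists_digitSum_add_mem_iff n m a

/-- For `k ≥ 3` and sets `A_1, …, A_k` of `m` integers each in `{1, …, U}`
(given by 0-indexed sorted enumerations `a i : {0,…,m-1} → ℕ` for `i < k`), the inner
product of `v'_{A_1+⋯+A_{k-1}}` (blocks `0^{a_1+⋯+a_{k-2}} v_{A_{k-1}} 0^{(k-2)U - Σ}`
over all tuples of `A_1 × ⋯ × A_{k-2}` in lexicographic order) and
`v'_{A_k} = (v_{A_k} 0^{(k-2)U})^{m^{k-2}}` is nonzero iff there is
`(a_1, …, a_k) ∈ A_1 × ⋯ × A_k` with `a_1 + ⋯ + a_{k-1} = a_k`. -/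
theorem stmt1 (k m U : ℕ) (hk : 3 ≤ k) (hm : 1 ≤ m) (hU : 1 ≤ U)
    (a : ℕ → ℕ → ℕ)
    (hmono : ∀ i < k, ∀ j j' : ℕ, j < j' → j' < m → a i j < a i j')
    (hmem : ∀ i < k, ∀ j < m, a i j ∈ Finset.Icc 1 U) :
    -- sum of the tuple encoded (in lexicographic order) by block index `j < m^(k-2)`
    let S : ℕ → ℕ := fun j =>
      ∑ d ∈ Finset.range (k - 2), a d (j / m ^ (k - 2 - 1 - d) % m)
    let vAk1 : List ℕ := charVec U (Finset.image (a (k - 2)) (Finset.range m))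
    let vAk : List ℕ := charVec U (Finset.image (a (k - 1)) (Finset.range m))
    let v1 : List ℕ := ((List.range (m ^ (k - 2))).map (fun j =>
      List.replicate (S j) 0 ++ vAk1 ++ List.replicate ((k - 2) * U - S j) 0)).flatten
    let v2 : List ℕ :=
      (List.replicate (m ^ (k - 2)) (vAk ++ List.replicate ((k - 2) * U) 0)).flatten
    innerProd v1 v2 ≠ 0 ↔
      ∃ f : ℕ → ℕ, (∀ i < k, f i < m) ∧
        (∑ i ∈ Finset.range (k - 1), a i (f i)) = a (k - 1) (f (k - 1)) :=
  stmt1_general k m U hk a hmem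
end

section
/- Let ℓ ≥ 1 and n ≥ 1. If a string x is generated by an SLP of size n, then x contains at most n·ℓ distinct contiguous substrings of length ℓ. -/
/-- A rule of a straight-line program: either a terminal symbol, or the ordered
pair `(j, k)` of the indices of two strictly earlier rules to be concatenated. -/
inductive SLPRule (α : Type*) where
  | sym (a : α)
  | pair (j k : ℕ)

/-- A straight-line program (SLP) over the alphabet `α`: a finite sequence of
rules, where each pair rule may only reference strictly earlier rules. -/
structure SLP (α : Type*) where
  rules : List (SLPRule α)
  wf : ∀ i : Fin rules.length, match rules.get i with
    | .sym _ => True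
    | .pair j k => j < i.val ∧ k < i.val

/-- The size of an SLP is its number of rules. -/
def SLP.size {α : Type*} (G : SLP α) : ℕ := G.rules.length

/-- The list of the strings `eval(R_1), …, eval(R_n)` generated by the
successive rules of an SLP: a symbol rule evaluates to the corresponding
one-letter string, and a pair rule `(j, k)` evaluates to the concatenation
of the evaluations of the (earlier) rules `R_j` and `R_k`. -/
def SLP.evals {α : Type*} (G : SLP α) : List (List α) :=
  G.rules.foldl (fun acc r =>
    acc ++ [match r with
      | .sym a => [a]
      | .pair j k => acc.getD j [] ++ acc.getD k []]) []

/-- An SLP generates the string which its last rule evaluates to. -/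
def SLP.generates {α : Type*} (G : SLP α) (s : List α) : Prop :=
  G.evals.getLast? = some s

/-!
Every window of length `ℓ ≥ 1` of `eval(R_i)` either is the single letter of a symbol rule,
or, if `R_i = (j, k)`, lies inside `eval(R_j)`, inside `eval(R_k)`, or crosses the junction
between them. Descending into the halves, every window of the generated string therefore
crosses the junction of some pair rule or is the letter of some symbol rule. A window crossing
the junction of `u ++ v` is determined by how many of its letters come from `u`, a number
below `ℓ`; so each rule accounts for at most `ℓ` windows, `n·ℓ` in total.
-/

namespace List

variable {α : Type*} [DecidableEq α]

def crossingWindows (ℓ : ℕ) (u v : List α) : Finset (List α) :=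
  (Finset.range ℓ).image fun d => ((u ++ v).drop (u.length - d)).take ℓ

theorem card_crossingWindows_le (ℓ : ℕ) (u v : List α) :
    (crossingWindows ℓ u v).card ≤ ℓ :=
  Finset.card_image_le.trans_eq (Finset.card_range ℓ)

theorem IsInfix.infix_or_infix_or_mem_crossingWindows {w u v : List α}
    (h : w <:+: u ++ v) :
    w <:+: u ∨ w <:+: v ∨ w ∈ crossingWindows w.length u v := by
  obtain ⟨s, t, hst⟩ := h
  rw [append_assoc, append_eq_append_iff] at hst
  obtain ⟨a, rfl, hwt⟩ | ⟨c, rfl, rfl⟩ := hst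
  · obtain ⟨b, rfl, rfl⟩ | ⟨c, rfl, rfl⟩ := append_eq_append_iff.mp hwt
    · exact .inl ⟨s, b, by simp⟩
    · rcases c with _ | ⟨x, c⟩
      · exact .inl ⟨s, [], by simp⟩
      · refine .inr (.inr (Finset.mem_image.mpr ⟨a.length, by simp, ?_⟩))
        simpa [Nat.add_comm] using take_left (l₁ := a ++ x :: c) (l₂ := t)
  · exact .inr (.inl ⟨c, t, by simp⟩)

end List

namespace SLPRule

variable {α : Type*}

def eval (acc : List (List α)) : SLPRule α → List α
  | sym a => [a]
  | pair j k => acc.getD j [] ++ acc.getD k []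

def evalsOf (rs : List (SLPRule α)) : List (List α) :=
  rs.foldl (fun acc r => acc ++ [r.eval acc]) []

theorem evalsOf_append_singleton (rs : List (SLPRule α)) (r : SLPRule α) :
    evalsOf (rs ++ [r]) = evalsOf rs ++ [r.eval (evalsOf rs)] := by
  simp [evalsOf, List.foldl_append]

theorem length_evalsOf (rs : List (SLPRule α)) : (evalsOf rs).length = rs.length := by
  induction rs using List.reverseRecOn with
  | nil => rfl
  | append_singleton rs r ih => simp [evalsOf_append_singleton, ih]

theorem evalsOf_prefix_evalsOf_append (rs rs' : List (SLPRule α)) :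
    evalsOf rs <+: evalsOf (rs ++ rs') := by
  induction rs' using List.reverseRecOn with
  | nil => simp
  | append_singleton rs' r ih =>
    rw [← List.append_assoc, evalsOf_append_singleton]
    exact ih.trans (List.prefix_append _ _)

theorem getD_evalsOf {rs : List (SLPRule α)} {i : ℕ} (hi : i < rs.length) :
    (evalsOf rs).getD i [] = rs[i].eval (evalsOf (rs.take i)) := by
  have hpre : evalsOf (rs.take i ++ [rs[i]]) <+: evalsOf rs := by
    simpa [← List.take_add_one, List.take_append_drop] using
      evalsOf_prefix_evalsOf_append (rs.take (i + 1)) (rs.drop (i + 1))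
  rw [evalsOf_append_singleton] at hpre
  have hlen : (evalsOf (rs.take i)).length = i := by
    simp [length_evalsOf, hi.le]
  rw [List.getD_eq_getElem _ _ (by simpa [length_evalsOf] using hi),
    ← hpre.getElem (by simp [hlen])]
  simp [hlen]

end SLPRule

namespace SLP

variable {α : Type*}

theorem evals_eq_evalsOf (G : SLP α) : G.evals = SLPRule.evalsOf G.rules := rfl

def eval (G : SLP α) (i : ℕ) : List α := G.evals.getD i []

theorem lt_of_getElem?_eq_pair {G : SLP α} {i j k : ℕ} (h : G.rules[i]? = some (.pair j k)) :
    j < i ∧ k < i := by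
  obtain ⟨hi, hr⟩ := List.getElem?_eq_some_iff.mp h
  simpa [hr] using G.wf ⟨i, hi⟩

theorem eval_of_size_le {G : SLP α} {i : ℕ} (hi : G.size ≤ i) : G.eval i = [] := by
  rw [eval, List.getD_eq_default]
  simpa [evals_eq_evalsOf, SLPRule.length_evalsOf, size] using hi

theorem eval_of_getElem?_eq_some {G : SLP α} {i : ℕ} {r : SLPRule α}
    (h : G.rules[i]? = some r) :
    G.eval i = r.eval (SLPRule.evalsOf (G.rules.take i)) := by
  obtain ⟨hi, rfl⟩ := List.getElem?_eq_some_iff.mp h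
  rw [eval, evals_eq_evalsOf, SLPRule.getD_evalsOf hi]

theorem eval_of_getElem?_eq_sym {G : SLP α} {i : ℕ} {a : α} (h : G.rules[i]? = some (.sym a)) :
    G.eval i = [a] :=
  eval_of_getElem?_eq_some h

theorem eval_of_getElem?_eq_pair {G : SLP α} {i j k : ℕ} (h : G.rules[i]? = some (.pair j k)) :
    G.eval i = G.eval j ++ G.eval k := by
  obtain ⟨hj, hk⟩ := lt_of_getElem?_eq_pair h
  obtain ⟨rest, hrest⟩ : SLPRule.evalsOf (G.rules.take i) <+: G.evals := by
    simpa [evals_eq_evalsOf] using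
      SLPRule.evalsOf_prefix_evalsOf_append (G.rules.take i) (G.rules.drop i)
  obtain ⟨hi, -⟩ := List.getElem?_eq_some_iff.mp h
  have hlen : (SLPRule.evalsOf (G.rules.take i)).length = i := by
    simp [SLPRule.length_evalsOf, hi.le]
  rw [eval_of_getElem?_eq_some h, SLPRule.eval, eval, eval, ← hrest,
    List.getD_append _ _ _ _ (by omega), List.getD_append _ _ _ _ (by omega)]

theorem eq_eval_of_generates {G : SLP α} {x : List α} (h : G.generates x) :
    x = G.eval (G.size - 1) := by
  rw [generates, List.getLast?_eq_getElem?, evals_eq_evalsOf, SLPRule.length_evalsOf] at h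
  rw [eval, List.getD_eq_getElem?_getD, evals_eq_evalsOf, size, h, Option.getD_some]

variable [DecidableEq α]

def ruleWindows (G : SLP α) (ℓ i : ℕ) : Finset (List α) :=
  match G.rules[i]? with
  | some (.sym a) => {[a]}
  | some (.pair j k) => List.crossingWindows ℓ (G.eval j) (G.eval k)
  | none => ∅

theorem card_ruleWindows_le (G : SLP α) {ℓ : ℕ} (hℓ : 1 ≤ ℓ) (i : ℕ) :
    (G.ruleWindows ℓ i).card ≤ ℓ := by
  unfold ruleWindows
  split
  · simpa using hℓ
  · exact List.card_crossingWindows_le ..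
  · simp

def windows (G : SLP α) (ℓ : ℕ) : Finset (List α) :=
  (Finset.range G.size).biUnion (G.ruleWindows ℓ)

theorem card_windows_le (G : SLP α) {ℓ : ℕ} (hℓ : 1 ≤ ℓ) :
    (G.windows ℓ).card ≤ G.size * ℓ := by
  simpa [windows] using
    Finset.card_biUnion_le_card_mul (Finset.range G.size) _ ℓ
      fun i _ ↦ G.card_ruleWindows_le hℓ i

theorem mem_windows_of_mem_ruleWindows {G : SLP α} {ℓ i : ℕ} {w : List α}
    (h : w ∈ G.ruleWindows ℓ i) :
    w ∈ G.windows ℓ := by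
  refine Finset.mem_biUnion.mpr ⟨i, Finset.mem_range.mpr ?_, h⟩
  by_contra hi
  simp [ruleWindows, List.getElem?_eq_none (not_lt.mp hi)] at h

theorem mem_windows_of_infix_eval (G : SLP α) {w : List α} (hw : w ≠ []) (i : ℕ)
    (h : w <:+: G.eval i) : w ∈ G.windows w.length := by
  induction i using Nat.strong_induction_on with
  | _ i ih =>
    match hr : G.rules[i]? with
    | none =>
      rw [eval_of_size_le (by simpa [size] using hr), List.infix_nil] at h
      exact absurd h hw
    | some (.sym a) =>
      rw [eval_of_getElem?_eq_sym hr, List.infix_singleton_iff] at h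
      obtain rfl := h.resolve_left hw
      exact mem_windows_of_mem_ruleWindows (i := i) (by simp [ruleWindows, hr])
    | some (.pair j k) =>
      obtain ⟨hj, hk⟩ := lt_of_getElem?_eq_pair hr
      rw [eval_of_getElem?_eq_pair hr] at h
      rcases h.infix_or_infix_or_mem_crossingWindows with h | h | h
      · exact ih j hj h
      · exact ih k hk h
      · exact mem_windows_of_mem_ruleWindows (i := i) (by simpa [ruleWindows, hr] using h)

end SLP

theorem stmt7_general {α : Type} (ℓ n : ℕ) (hℓ : 1 ≤ ℓ)
    (G : SLP α) (hsize : G.size = n) (x : List α) (hgen : G.generates x) :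
    {w : List α | w.length = ℓ ∧ w <:+: x}.ncard ≤ n * ℓ := by
  classical
  have hsub : {w : List α | w.length = ℓ ∧ w <:+: x} ⊆ G.windows ℓ := by
    rintro w ⟨rfl, hw⟩
    rw [SLP.eq_eval_of_generates hgen] at hw
    exact G.mem_windows_of_infix_eval (List.ne_nil_of_length_pos hℓ) _ hw
  calc {w : List α | w.length = ℓ ∧ w <:+: x}.ncard
      ≤ (G.windows ℓ : Set (List α)).ncard := Set.ncard_le_ncard hsub
    _ ≤ n * ℓ := by rw [Set.ncard_coe_finset, ← hsize]; exact G.card_windows_le hℓ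

/-- if a string `x` is generated by an SLP of size `n`, then `x`
contains at most `n·ℓ` distinct contiguous substrings of length `ℓ`. -/
theorem stmt7 {α : Type} (ℓ n : ℕ) (hℓ : 1 ≤ ℓ) (hn : 1 ≤ n)
    (G : SLP α) (hsize : G.size = n) (x : List α) (hgen : G.generates x) :
    {w : List α | w.length = ℓ ∧ w <:+: x}.ncard ≤ n * ℓ :=
  stmt7_general ℓ n hℓ G hsize x hgen
end

section
/- There is a constant c > 0 such that the following holds for every ℓ ≥ 1. Let N = 2^ℓ(2ℓ+1), let A' be the (2^ℓ × 2ℓ) matrix with rows indexed by x ∈ {0,1}^ℓ in lexicographic order given by A'[x, j] = x_j for 1 ≤ j ≤ ℓ and A'[x, j] = 1 for ℓ < j ≤ 2ℓ, and let B' be the (2ℓ × 2^ℓ·2ℓ) matrix with columns indexed by (y, k) ∈ {0,1}^ℓ × {1, …, 2ℓ} in lexicographic order given by B'[i,(y,k)] = 1 if i = k ≤ ℓ, B'[i,(y,k)] = y_{k−ℓ} if i = k > ℓ, and B'[i,(y,k)] = 0 otherwise. Let A be the N × N block matrix whose top-left (2^ℓ × 2ℓ) block is A', whose rows 2^ℓ+1,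 …, N restricted to columns 2ℓ+1, …, 4ℓ form the transpose of B', and all of whose remaining entries are 0. Then there exists an SLP over {0,1} of size at most c·ℓ² generating the string of length N² obtained by reading the entries of A column by column. -/
/-- The `j`-th bit (0-indexed, most significant bit first) of the `ℓ`-bit
binary representation of `x`, as an element of the alphabet `{0,1}`. -/
def bitOf2 (ℓ x j : ℕ) : Fin 2 := if x / 2 ^ (ℓ - 1 - j) % 2 = 1 then 1 else 0

theorem List.map_range_mul {β : Type*} (f : ℕ → β) (m n : ℕ) :
    (List.range (m * n)).map f =
      ((List.range m).map fun i => (List.range n).map fun j => f (i * n + j)).flatten := by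
  induction m with
  | zero => simp
  | succ m ih =>
    rw [Nat.succ_mul, List.range_add, List.map_append, ih, List.range_succ, List.map_append,
      List.flatten_append, List.map_map]
    simp [Function.comp_def]

theorem List.map_range_ite_eq {β : Type*} {n k : ℕ} (hk : k < n) (a b : β) :
    (List.range n).map (fun i => if i = k then b else a) =
      List.replicate k a ++ b :: List.replicate (n - 1 - k) a := by
  obtain ⟨r, rfl⟩ : ∃ r, n = k + (r + 1) := ⟨n - 1 - k, by omega⟩
  rw [List.range_add, List.range_succ_eq_map, List.map_append, List.map_map, List.map_cons,
    List.map_map, show k + (r + 1) - 1 - k = r by omega]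
  congr 1
  · exact List.eq_replicate_iff.mpr ⟨by simp, by simp +contextual [Nat.ne_of_lt]⟩
  · simp only [Function.comp_def, Nat.add_zero, if_true]
    exact congrArg _ (List.eq_replicate_iff.mpr ⟨by simp, by simp⟩)

theorem bitOf2_mul_add {ℓ j q : ℕ} (i : ℕ) (hq : q < 2 ^ (ℓ - 1 - j)) :
    bitOf2 ℓ (i * 2 ^ (ℓ - 1 - j) + q) j = if i % 2 = 1 then 1 else 0 := by
  rw [bitOf2, Nat.add_comm, Nat.add_mul_div_right _ _ (by positivity), Nat.div_eq_of_lt hq,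
    Nat.zero_add]

theorem flatten_map_range_bitOf2 {α : Type*} (u : Fin 2 → List α) {ℓ j : ℕ} (hj : j < ℓ) :
    ((List.range (2 ^ ℓ)).map fun y => u (bitOf2 ℓ y j)).flatten =
      (List.replicate (2 ^ j) ((List.replicate (2 ^ (ℓ - 1 - j)) (u 0)).flatten ++
        (List.replicate (2 ^ (ℓ - 1 - j)) (u 1)).flatten)).flatten := by
  set p := ℓ - 1 - j
  have hpow : 2 ^ ℓ = 2 ^ j * (2 * 2 ^ p) := by
    rw [← pow_succ', ← pow_add]; congr 1; omega
  have hblock : ∀ i h q, q < 2 ^ p →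
      bitOf2 ℓ (i * (2 * 2 ^ p) + (h * 2 ^ p + q)) j = if h % 2 = 1 then 1 else 0 := by
    intro i h q hq
    rw [show i * (2 * 2 ^ p) + (h * 2 ^ p + q) = (2 * i + h) * 2 ^ p + q by ring,
      bitOf2_mul_add _ hq, Nat.mul_add_mod]
  rw [hpow, List.map_range_mul, List.flatten_flatten, List.map_map,
    ← List.length_range (n := 2 ^ j), ← List.map_const', List.length_range]
  refine congrArg _ (List.map_congr_left fun i _ => ?_)
  have hhalf : ∀ h : ℕ, ((List.range (2 ^ p)).map fun q =>
      u (bitOf2 ℓ (i * (2 * 2 ^ p) + (h * 2 ^ p + q)) j)).flatten =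
        (List.replicate (2 ^ p) (u (if h % 2 = 1 then 1 else 0))).flatten := by
    intro h
    rw [← List.length_range (n := 2 ^ p), ← List.map_const', List.length_range]
    exact congrArg _ (List.map_congr_left fun q hq => by rw [hblock _ _ _ (List.mem_range.mp hq)])
  rw [Function.comp_apply, List.map_range_mul, List.flatten_flatten, List.map_map,
    show List.range 2 = [0, 1] from rfl]
  simp only [List.map_cons, List.map_nil, List.flatten_cons, List.flatten_nil, List.append_nil,
    Function.comp_apply, hhalf]
  rfl

theorem List.IsPrefix.getD_eq {α : Type*} {l l' : List α} (h : l <+: l') {i : ℕ}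
    (hi : i < l.length) (d : α) : l'.getD i d = l.getD i d := by
  obtain ⟨t, rfl⟩ := h
  exact List.getD_append _ _ _ _ hi

abbrev SLPRule.RefsBelow {α : Type*} (n : ℕ) : SLPRule α → Prop
  | .sym _ => True
  | .pair j k => j < n ∧ k < n

namespace SLP

variable {α : Type*}

def evalRule (acc : List (List α)) : SLPRule α → List α
  | .sym a => [a]
  | .pair j k => acc.getD j [] ++ acc.getD k []

def empty : SLP α := ⟨[], fun i => absurd i.isLt (Nat.not_lt_zero _)⟩

def snoc (G : SLP α) (r : SLPRule α) (hr : r.RefsBelow G.size) : SLP α where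
  rules := G.rules ++ [r]
  wf i := by
    rcases Nat.lt_or_ge i.val G.rules.length with hi | hi
    · have hget : (G.rules ++ [r]).get i = G.rules.get ⟨i, hi⟩ := List.getElem_append_left hi
      rw [hget]
      exact G.wf ⟨i, hi⟩
    · have hlast : i.val = G.size := by
        have : i.val < G.rules.length + 1 := by simpa using i.isLt
        exact (show i.val = G.rules.length by omega)
      have hget : (G.rules ++ [r]).get i = r := by simp [List.getElem_append_right hi]
      rw [hget]
      cases r with
      | sym a => trivial
      | pair j k => exact hlast ▸ hr

theorem size_snoc (G : SLP α) (r : SLPRule α) (hr : r.RefsBelow G.size) :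
    (G.snoc r hr).size = G.size + 1 := by
  simp [snoc, size]

theorem evals_snoc (G : SLP α) (r : SLPRule α) (hr : r.RefsBelow G.size) :
    (G.snoc r hr).evals = G.evals ++ [evalRule G.evals r] := by
  simp only [evals, snoc, List.foldl_append, List.foldl_cons, List.foldl_nil]
  cases r <;> rfl

theorem length_evals (G : SLP α) : G.evals.length = G.size := by
  suffices ∀ (rs : List (SLPRule α)) (acc : List (List α)),
      (rs.foldl (fun acc r => acc ++ [match r with
        | .sym a => [a]
        | .pair j k => acc.getD j [] ++ acc.getD k []]) acc).length = acc.length + rs.length from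
    (this G.rules []).trans (Nat.zero_add _)
  intro rs
  induction rs with
  | nil => simp
  | cons r rs ih =>
    intro acc
    rw [List.foldl_cons, ih, List.length_append, List.length_singleton, List.length_cons]
    omega

theorem generates.getD_size_sub_one {G : SLP α} {s : List α} (h : G.generates s) :
    G.evals.getD (G.size - 1) [] = s := by
  rw [← length_evals, List.getD_eq_getElem?_getD, ← List.getLast?_eq_getElem?, h]
  rfl

theorem generates.size_pos {G : SLP α} {s : List α} (h : G.generates s) : 0 < G.size := by
  rw [← length_evals]
  exact List.length_pos_iff.mpr (fun he => by simp [generates, he] at h)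

/-- `s` can be generated by appending at most `n` rules to any SLP, keeping the strings of its
rules; unlike "some SLP of size `n` generates `s`", this lets pieces built earlier be reused. -/
def Builds (n : ℕ) (s : List α) : Prop :=
  ∀ G : SLP α, ∃ G' : SLP α,
    G.evals <+: G'.evals ∧ G'.size ≤ G.size + n ∧ G'.generates s

theorem Builds.mono {m n : ℕ} {s : List α} (h : Builds m s) (hmn : m ≤ n) : Builds n s := by
  intro G
  obtain ⟨G', hpre, hsize, hgen⟩ := h G
  exact ⟨G', hpre, hsize.trans (by omega), hgen⟩

theorem exists_generates_of_builds {n : ℕ} {s : List α} (h : Builds n s) :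
    ∃ G : SLP α, G.generates s ∧ G.size ≤ n := by
  obtain ⟨G, -, hsize, hgen⟩ := h empty
  exact ⟨G, hgen, by simpa [empty, size] using hsize⟩

theorem builds_singleton (a : α) : Builds 1 [a] := fun G =>
  ⟨G.snoc (.sym a) trivial, by rw [evals_snoc]; exact List.prefix_append _ _,
    (size_snoc ..).le, by rw [generates, evals_snoc]; exact List.getLast?_concat⟩

theorem generates_snoc_pair {G : SLP α} {j k : ℕ} (hj : j < G.size) (hk : k < G.size) :
    (G.snoc (.pair j k) ⟨hj, hk⟩).generates (G.evals.getD j [] ++ G.evals.getD k []) := by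
  rw [generates, evals_snoc]
  exact List.getLast?_concat

theorem Builds.append {m n : ℕ} {s t : List α} (hs : Builds m s) (ht : Builds n t) :
    Builds (m + n + 1) (s ++ t) := by
  intro G
  obtain ⟨G₁, hpre₁, hsize₁, hgen₁⟩ := hs G
  obtain ⟨G₂, hpre₂, hsize₂, hgen₂⟩ := ht G₁
  have hle : G₁.size ≤ G₂.size := by
    simpa only [length_evals] using hpre₂.length_le
  have hpos₁ := hgen₁.size_pos
  have hpos₂ := hgen₂.size_pos
  refine ⟨G₂.snoc (.pair (G₁.size - 1) (G₂.size - 1)) ⟨by omega, by omega⟩,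
    ?_, ?_, ?_⟩
  · rw [evals_snoc]
    exact (hpre₁.trans hpre₂).trans (List.prefix_append _ _)
  · rw [size_snoc]; omega
  · have h := generates_snoc_pair (G := G₂) (j := G₁.size - 1) (k := G₂.size - 1)
      (by omega) (by omega)
    rwa [hpre₂.getD_eq (by rw [length_evals]; omega), hgen₁.getD_size_sub_one,
      hgen₂.getD_size_sub_one] at h

theorem Builds.append_self {n : ℕ} {s : List α} (hs : Builds n s) : Builds (n + 1) (s ++ s) := by
  intro G
  obtain ⟨G₁, hpre, hsize, hgen⟩ := hs G
  have hpos := hgen.size_pos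
  refine ⟨G₁.snoc (.pair (G₁.size - 1) (G₁.size - 1)) ⟨by omega, by omega⟩,
    ?_, ?_, ?_⟩
  · rw [evals_snoc]
    exact hpre.trans (List.prefix_append _ _)
  · rw [size_snoc]; omega
  · have h := generates_snoc_pair (G := G₁) (j := G₁.size - 1) (k := G₁.size - 1)
      (by omega) (by omega)
    rwa [hgen.getD_size_sub_one] at h

theorem Builds.flatten_replicate_two_pow {n : ℕ} {s : List α} (h : Builds n s) (k : ℕ) :
    Builds (n + k) (List.replicate (2 ^ k) s).flatten := by
  induction k with
  | zero => simpa using h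
  | succ k ih =>
    rw [pow_succ, mul_two, List.replicate_add, List.flatten_append]
    exact ih.append_self

theorem builds_replicate (a : α) {m : ℕ} (hm : m ≠ 0) :
    Builds (3 * Nat.log 2 m + 1) (List.replicate m a) := by
  induction m using Nat.strong_induction_on with
  | _ m ih =>
    rcases Nat.lt_or_ge m 2 with hm2 | hm2
    · obtain rfl : m = 1 := by omega
      exact builds_singleton a
    have hlog : Nat.log 2 (m / 2) + 1 = Nat.log 2 m := by
      rw [Nat.log_div_base]
      have := Nat.log_pos one_lt_two hm2
      omega
    have hhalf := (ih (m / 2) (by omega) (by omega)).append_self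
    rw [← List.replicate_add] at hhalf
    rcases Nat.even_or_odd' m with ⟨q, rfl | rfl⟩
    · rw [show 2 * q / 2 + 2 * q / 2 = 2 * q by omega] at hhalf
      exact hhalf.mono (by omega)
    · have h := hhalf.append (builds_singleton a)
      rw [← List.replicate_succ', show (2 * q + 1) / 2 + (2 * q + 1) / 2 + 1 = 2 * q + 1 by omega]
        at h
      exact h.mono (by omega)

theorem Builds.replicate_append (a : α) (m : ℕ) {n : ℕ} {s : List α} (h : Builds n s) :
    Builds (3 * Nat.log 2 m + n + 2) (List.replicate m a ++ s) := by
  rcases Nat.eq_zero_or_pos m with rfl | hm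
  · exact h.mono (by omega)
  · exact ((builds_replicate a hm.ne').append h).mono (by omega)

theorem Builds.append_replicate (a : α) (m : ℕ) {n : ℕ} {s : List α} (h : Builds n s) :
    Builds (n + 3 * Nat.log 2 m + 2) (s ++ List.replicate m a) := by
  rcases Nat.eq_zero_or_pos m with rfl | hm
  · simpa using h.mono (by omega)
  · exact (h.append (builds_replicate a hm.ne')).mono (by omega)

theorem builds_flatten {n : ℕ} {L : List (List α)} (hL : ∀ s ∈ L, Builds n s)
    (hne : L ≠ []) :
    Builds (L.length * (n + 1)) L.flatten := by
  induction L with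
  | nil => exact absurd rfl hne
  | cons s L ih =>
    rcases eq_or_ne L [] with rfl | hL'
    · simpa using (hL s (by simp)).mono (by omega)
    · have h := (hL s (by simp)).append (ih (fun t ht => hL t (by simp [ht])) hL')
      rw [List.flatten_cons]
      exact h.mono (by simp only [List.length_cons]; nlinarith)

theorem Builds.flatten_map_range_two_pow {n : ℕ} {s : List α} (h : Builds n s) (k : ℕ) :
    Builds (n + k) (((List.range (2 ^ k)).map fun _ => s).flatten) := by
  simpa only [List.map_const', List.length_range] using h.flatten_replicate_two_pow k

theorem builds_flatten_map_bitOf2 {u : Fin 2 → List α} {n ℓ j : ℕ} (h₀ : Builds n (u 0))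
    (h₁ : Builds n (u 1)) (hj : j < ℓ) :
    Builds (2 * n + 2 * ℓ)
      (((List.range (2 ^ ℓ)).map fun y => u (bitOf2 ℓ y j)).flatten) := by
  rw [flatten_map_range_bitOf2 u hj]
  exact (((h₀.flatten_replicate_two_pow _).append
    (h₁.flatten_replicate_two_pow _)).flatten_replicate_two_pow j).mono (by omega)

theorem builds_map_range_ite_eq {n k : ℕ} (hk : k < n) (a b : α) :
    Builds (3 * n + 2) ((List.range n).map fun i => if i = k then b else a) := by
  rw [List.map_range_ite_eq hk, ← List.singleton_append]
  have h := ((builds_singleton b).append_replicate a (n - 1 - k)).replicate_append a k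
  have := Nat.log_le_self 2 k
  have := Nat.log_le_self 2 (n - 1 - k)
  exact h.mono (by omega)

end SLP

namespace BitMatrix

def dim (ℓ : ℕ) : ℕ := 2 ^ ℓ * (2 * ℓ + 1)

/-- The `Aent` of `stmt16`, verbatim, so that its `colStr` is `columnString ℓ` by definition. -/
def entry (ℓ r c : ℕ) : Fin 2 :=
  if r < 2 ^ ℓ ∧ c < 2 * ℓ then
    (if c < ℓ then bitOf2 ℓ r c else 1)
  else if 2 ^ ℓ ≤ r ∧ 2 * ℓ ≤ c ∧ c < 4 * ℓ then
    (if c - 2 * ℓ = (r - 2 ^ ℓ) % (2 * ℓ) then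
      (if (r - 2 ^ ℓ) % (2 * ℓ) < ℓ then 1
       else bitOf2 ℓ ((r - 2 ^ ℓ) / (2 * ℓ)) ((r - 2 ^ ℓ) % (2 * ℓ) - ℓ))
     else 0)
  else 0

def column (ℓ c : ℕ) : List (Fin 2) :=
  (List.range (dim ℓ)).map fun r => entry ℓ r c

theorem entry_of_lt_two_pow {ℓ x : ℕ} (c : ℕ) (hx : x < 2 ^ ℓ) :
    entry ℓ x c = if c < ℓ then bitOf2 ℓ x c else if c < 2 * ℓ then 1 else 0 := by
  by_cases hc : c < 2 * ℓ
  · simp [entry, hx, hc]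
  · rw [entry, if_neg (fun h => hc h.2), if_neg (fun h => absurd h.1 (by omega)), if_neg hc,
      if_neg (by omega)]

theorem entry_two_pow_add {ℓ k : ℕ} (y c : ℕ) (hk : k < 2 * ℓ) :
    entry ℓ (2 ^ ℓ + (y * (2 * ℓ) + k)) c =
      if 2 * ℓ ≤ c ∧ c < 4 * ℓ ∧ k = c - 2 * ℓ then
        (if k < ℓ then 1 else bitOf2 ℓ y (k - ℓ))
      else 0 := by
  have hmod : (y * (2 * ℓ) + k) % (2 * ℓ) = k := by
    rw [Nat.mul_comm, Nat.mul_add_mod, Nat.mod_eq_of_lt hk]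
  have hdiv : (y * (2 * ℓ) + k) / (2 * ℓ) = y := by
    rw [Nat.mul_comm, Nat.mul_add_div (by omega), Nat.div_eq_of_lt hk, Nat.add_zero]
  simp only [entry, Nat.add_sub_cancel_left, hmod, hdiv]
  rw [if_neg (fun h => by omega)]
  by_cases hc : 2 * ℓ ≤ c ∧ c < 4 * ℓ
  · rw [if_pos ⟨Nat.le_add_right _ _, hc⟩]
    by_cases hkc : k = c - 2 * ℓ
    · rw [if_pos hkc.symm,
        if_pos (⟨hc.1, hc.2, hkc⟩ : 2 * ℓ ≤ c ∧ c < 4 * ℓ ∧ k = c - 2 * ℓ)]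
    · rw [if_neg (Ne.symm hkc), if_neg (fun h => hkc h.2.2)]
  · rw [if_neg (fun h => hc h.2), if_neg (fun h => hc ⟨h.1, h.2.1⟩)]

theorem entry_of_four_mul_le {ℓ c : ℕ} (r : ℕ) (hc : 4 * ℓ ≤ c) : entry ℓ r c = 0 := by
  simp only [entry]
  split_ifs <;> omega

theorem column_eq (ℓ c : ℕ) :
    column ℓ c =
      ((List.range (2 ^ ℓ)).map fun x => [entry ℓ x c]).flatten ++
      ((List.range (2 ^ ℓ)).map fun y =>
        (List.range (2 * ℓ)).map fun k => entry ℓ (2 ^ ℓ + (y * (2 * ℓ) + k)) c).flatten := by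
  rw [column, dim, Nat.mul_add_one, Nat.add_comm, List.range_add, List.map_append, List.map_map,
    List.map_range_mul, List.map_eq_flatMap, List.flatMap_def]
  rfl

theorem map_entry_two_pow_add {ℓ c : ℕ} (y : ℕ) (hc₁ : 2 * ℓ ≤ c) (hc₂ : c < 4 * ℓ) :
    (List.range (2 * ℓ)).map (fun k => entry ℓ (2 ^ ℓ + (y * (2 * ℓ) + k)) c) =
      (List.range (2 * ℓ)).map fun k =>
        if k = c - 2 * ℓ then (if c < 3 * ℓ then 1 else bitOf2 ℓ y (c - 3 * ℓ)) else 0 := by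
  refine List.map_congr_left fun k hk => ?_
  rw [entry_two_pow_add y c (List.mem_range.mp hk)]
  by_cases hkc : k = c - 2 * ℓ
  · rw [if_pos ⟨hc₁, hc₂, hkc⟩, if_pos hkc, hkc,
      show c - 2 * ℓ - ℓ = c - 3 * ℓ by omega]
    simp only [show c - 2 * ℓ < ℓ ↔ c < 3 * ℓ by omega]
  · rw [if_neg (fun h => hkc h.2.2), if_neg hkc]

theorem builds_top (ℓ c : ℕ) :
    SLP.Builds (2 * ℓ + 2) ((List.range (2 ^ ℓ)).map fun x => [entry ℓ x c]).flatten := by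
  rw [List.map_congr_left fun x hx => by rw [entry_of_lt_two_pow c (List.mem_range.mp hx)]]
  by_cases hc : c < ℓ
  · simp only [if_pos hc]
    exact (SLP.builds_flatten_map_bitOf2 (u := fun b => [b]) (SLP.builds_singleton 0)
      (SLP.builds_singleton 1) hc).mono (by omega)
  · simp only [if_neg hc]
    exact ((SLP.builds_singleton _).flatten_map_range_two_pow ℓ).mono (by omega)

theorem builds_bottom {ℓ : ℕ} (c : ℕ) (hℓ : 0 < ℓ) :
    SLP.Builds (14 * ℓ + 4) ((List.range (2 ^ ℓ)).map fun y =>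
      (List.range (2 * ℓ)).map fun k => entry ℓ (2 ^ ℓ + (y * (2 * ℓ) + k)) c).flatten := by
  by_cases hc : 2 * ℓ ≤ c ∧ c < 4 * ℓ
  · rw [List.map_congr_left fun y _ => map_entry_two_pow_add y hc.1 hc.2]
    have hunit (b : Fin 2) := SLP.builds_map_range_ite_eq (show c - 2 * ℓ < 2 * ℓ by omega) 0 b
    by_cases hc₃ : c < 3 * ℓ
    · simp only [if_pos hc₃]
      exact ((hunit 1).flatten_map_range_two_pow ℓ).mono (by omega)
    · simp only [if_neg hc₃]
      exact (SLP.builds_flatten_map_bitOf2 (u := fun b => (List.range (2 * ℓ)).map fun k =>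
        if k = c - 2 * ℓ then b else 0) (hunit 0) (hunit 1) (by omega)).mono (by omega)
  · have hzero : ∀ y, ((List.range (2 * ℓ)).map fun k =>
        entry ℓ (2 ^ ℓ + (y * (2 * ℓ) + k)) c) = List.replicate (2 * ℓ) 0 := fun y => by
      rw [← List.length_range (n := 2 * ℓ), ← List.map_const', List.length_range]
      exact List.map_congr_left fun k hk => by
        rw [entry_two_pow_add y c (List.mem_range.mp hk), if_neg (fun h => hc ⟨h.1, h.2.1⟩)]
    simp only [hzero]
    have := Nat.log_le_self 2 (2 * ℓ)
    exact ((SLP.builds_replicate 0 (by omega)).flatten_map_range_two_pow ℓ).mono (by omega)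

theorem builds_column {ℓ : ℕ} (c : ℕ) (hℓ : 0 < ℓ) :
    SLP.Builds (16 * ℓ + 7) (column ℓ c) := by
  rw [column_eq]
  exact ((builds_top ℓ c).append (builds_bottom c hℓ)).mono (by omega)

def columnString (ℓ : ℕ) : List (Fin 2) :=
  ((List.range (dim ℓ)).map (column ℓ)).flatten

theorem column_of_four_mul_le {ℓ c : ℕ} (hc : 4 * ℓ ≤ c) :
    column ℓ c = List.replicate (dim ℓ) 0 := by
  rw [column, List.map_congr_left fun r _ => entry_of_four_mul_le r hc, List.map_const',
    List.length_range]

theorem columnString_eq {ℓ M : ℕ} (hM : dim ℓ = 4 * ℓ + M) :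
    columnString ℓ = ((List.range (4 * ℓ)).map (column ℓ)).flatten ++
      List.replicate (M * dim ℓ) 0 := by
  have hzero : column ℓ ∘ (4 * ℓ + ·) = fun _ => List.replicate (dim ℓ) 0 :=
    funext fun i => column_of_four_mul_le (Nat.le_add_right _ i)
  rw [columnString, hM, List.range_add, List.map_append, List.flatten_append, List.map_map, ← hM,
    hzero, List.map_const', List.length_range, List.flatten_replicate_replicate]

theorem log_two_mul_dim_lt {ℓ M : ℕ} (hM : M ≤ dim ℓ) :
    Nat.log 2 (M * dim ℓ) < 6 * ℓ + 2 := by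
  refine Nat.log_lt_of_lt_pow' (by omega) ?_
  have hN : dim ℓ < 2 ^ (3 * ℓ + 1) := by
    unfold dim
    rw [show 3 * ℓ + 1 = ℓ + (2 * ℓ + 1) by ring, pow_add]
    exact Nat.mul_lt_mul_of_pos_left Nat.lt_two_pow_self (by positivity)
  calc M * dim ℓ < 2 ^ (3 * ℓ + 1) * 2 ^ (3 * ℓ + 1) :=
        Nat.mul_lt_mul'' (hM.trans_lt hN) hN
    _ = 2 ^ (6 * ℓ + 2) := by rw [← pow_add]; ring_nf

theorem builds_columnString {ℓ : ℕ} (hℓ : 1 ≤ ℓ) :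
    SLP.Builds (120 * ℓ ^ 2) (columnString ℓ) := by
  have hpow : 2 ≤ 2 ^ ℓ := le_self_pow₀ one_le_two (by omega)
  obtain ⟨M, hM⟩ := Nat.exists_eq_add_of_le (show 4 * ℓ ≤ dim ℓ by unfold dim; nlinarith)
  have hcolumns := SLP.builds_flatten (L := (List.range (4 * ℓ)).map (column ℓ))
    (fun s hs => by
      obtain ⟨c, -, rfl⟩ := List.mem_map.mp hs
      exact builds_column c hℓ)
    (by rw [Ne, List.map_eq_nil_iff, List.range_eq_nil]; omega)
  have hlog := log_two_mul_dim_lt (show M ≤ dim ℓ by omega)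
  rw [columnString_eq hM]
  refine (hcolumns.append_replicate 0 _).mono ?_
  simp only [List.length_map, List.length_range]
  nlinarith

end BitMatrix

/-- there is a constant `c > 0` such that for every `ℓ ≥ 1`,
with `N = 2^ℓ(2ℓ+1)` and `A` the `N × N` 0/1 matrix (rows and columns
0-indexed) whose top-left `(2^ℓ × 2ℓ)` block is `A'` (row `x` of `A'` is
`x ∘ 1^ℓ`), whose rows `2^ℓ, …, N-1` restricted to the columns `2ℓ, …, 4ℓ-1`
form the transpose of `B'` (columns of `B'` indexed by pairs `(y,k)` in
lexicographic order, with `B'[i,(y,k)] = 1` if `i = k < ℓ`, `= y_{k-ℓ}` if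
`i = k ≥ ℓ`, and `= 0` otherwise), and all remaining entries `0`, there is an
SLP over `{0,1}` of size at most `c·ℓ²` generating the string of length `N²`
obtained by reading the entries of `A` column by column. -/
theorem stmt16 :
    ∃ c : ℝ, 0 < c ∧
      ∀ ℓ : ℕ, 1 ≤ ℓ →
      let N : ℕ := 2 ^ ℓ * (2 * ℓ + 1)
      let Aent : ℕ → ℕ → Fin 2 := fun r c =>
        if r < 2 ^ ℓ ∧ c < 2 * ℓ then
          -- the top-left block `A'`
          (if c < ℓ then bitOf2 ℓ r c else 1)
        else if 2 ^ ℓ ≤ r ∧ 2 * ℓ ≤ c ∧ c < 4 * ℓ then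
          -- the transpose of `B'`: row `r - 2^ℓ` of `B'ᵀ` corresponds to the
          -- column `(y, k)` of `B'` with `y = (r - 2^ℓ) / (2ℓ)`,
          -- `k = (r - 2^ℓ) % (2ℓ)`
          (if c - 2 * ℓ = (r - 2 ^ ℓ) % (2 * ℓ) then
            (if (r - 2 ^ ℓ) % (2 * ℓ) < ℓ then 1
             else bitOf2 ℓ ((r - 2 ^ ℓ) / (2 * ℓ)) ((r - 2 ^ ℓ) % (2 * ℓ) - ℓ))
           else 0)
        else 0
      -- the entries of `A` read column by column
      let colStr : List (Fin 2) :=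
        ((List.range N).map (fun c => (List.range N).map (fun r => Aent r c))).flatten
      ∃ G : SLP (Fin 2), G.generates colStr ∧ (G.size : ℝ) ≤ c * ℓ ^ 2 := by
  refine ⟨120, by norm_num, fun ℓ hℓ => ?_⟩
  obtain ⟨G, hgen, hsize⟩ := SLP.exists_generates_of_builds (BitMatrix.builds_columnString hℓ)
  exact ⟨G, hgen, by exact_mod_cast hsize⟩
end
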